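/- Let ε > 0, t ∈ ℝ, d ∈ ℝ, e > 0, f > 0 and s₊ > 0. There exists a constant M > 0, depending only on t, d, e, f, with the following property: if Q is a twice continuously differentiable map from the closed unit ball of ℝ³ into the real symmetric traceless 3×3 matrices that satisfies, componentwise with the Euclidean Laplacian Δ, the Euler–Lagrange system ε²ΔQ_{ij} = tQ_{ij} − 3√6(Q_{ik}Q_{kj} − (1/3)δ_{ij} tr Q²) + 2Q_{ij} tr Q² + (2d/5)Q_{ij} tr Q³ + (3d/5)tr Q²(Q_{ik}Q_{kj} − (1/3)δ_{ij} tr Q²) + eQ_{ij}(tr Q²)² + (f−e)tr Q³(Q_{ik}Q_{kj} − (1/3)δ_{ij} tr Q³) on the open unit ball, and satisfies Q(x) = s₊(x̂ ⊗ x̂ − (1/3)I₃) for |x| = 1 (x̂ = x/|x|), then the Frobenius norm satisfies |Q(x)| ≤ max{M, √(2/3)·s₊} for every x in the closed unit ball. -/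

import Mathlib

noncomputable section
open MeasureTheory

abbrev E3 := EuclideanSpace ℝ (Fin 3)
abbrev Mat3 := Matrix (Fin 3) (Fin 3) ℝ

/-- Euclidean Laplacian of a scalar field on ℝ³ (sum of second directional
derivatives along the standard orthonormal basis). -/
def lap (u : E3 → ℝ) (x : E3) : ℝ :=
  ∑ k : Fin 3, fderiv ℝ (fun y => fderiv ℝ u y (EuclideanSpace.single k 1)) x
    (EuclideanSpace.single k 1)

/-- Right-hand side of the Euler–Lagrange system for the sixth-order potential. -/
def ELrhs (t d e f : ℝ) (Q : Mat3) : Mat3 :=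
  t • Q
    - (3 * Real.sqrt 6) • (Q * Q - ((Q * Q).trace / 3) • (1 : Mat3))
    + (2 * (Q * Q).trace) • Q
    + (2 * d / 5 * (Q * Q * Q).trace) • Q
    + (3 * d / 5 * (Q * Q).trace) • (Q * Q - ((Q * Q).trace / 3) • (1 : Mat3))
    + (e * ((Q * Q).trace) ^ 2) • Q
    + ((f - e) * (Q * Q * Q).trace) • (Q * Q - ((Q * Q * Q).trace / 3) • (1 : Mat3))

/-- Frobenius norm of a 3×3 real matrix. -/
def fro (Q : Mat3) : ℝ := Real.sqrt (∑ i : Fin 3, ∑ j : Fin 3, (Q i j) ^ 2)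

/-- The homeotropic boundary Q-tensor `Q_{s₊}(x) = s₊(x̂⊗x̂ − I/3)`. -/
def Qbdry (sp : ℝ) (x : E3) : Mat3 :=
  sp • (Matrix.of (fun i j => x i * x j / ‖x‖ ^ 2) - (1 / 3 : ℝ) • (1 : Mat3))

/-! Maximum principle for `|Q|²`. At an interior maximum `x₀` of `|Q|²` every second directional
derivative of `|Q|²` is nonpositive, and `∂ₕ²|Q|² = 2 Q : ∂ₕ²Q + 2 |∂ₕQ|²`, so `Q : ΔQ ≤ 0` at `x₀`.
Contracting the Euler–Lagrange system with a symmetric traceless `Q` gives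
`ε² Q : ΔQ = t a + 2a² + e a³ + (f - e) b² + d a b - 3√6 b` with `a = tr Q²`, `b = tr Q³`; since
`b² ≤ a³`, the sextic part is at least `min e f · a³`, so the right side is positive once `|Q|`
exceeds a threshold `R(t, d, e, f)`. Hence `|Q| ≤ R` at an interior maximum, while at a boundary
maximum `|Q| = √(2/3) s₊`. -/

open Filter Topology

theorem deriv_deriv_nonpos_of_isLocalMax {f : ℝ → ℝ} {x₀ : ℝ} (hmax : IsLocalMax f x₀)
    (hc : ContinuousAt f x₀) : deriv (deriv f) x₀ ≤ 0 := by
  by_contra! hpos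
  have hmin := isLocalMin_of_deriv_deriv_pos hpos hmax.deriv_eq_zero hc
  have hconst : f =ᶠ[𝓝 x₀] fun _ => f x₀ :=
    (hmin.and hmax).mono fun x hx => le_antisymm hx.2 hx.1
  have hzero : deriv (deriv f) x₀ = 0 := by simpa using hconst.deriv.deriv_eq
  exact hpos.ne' hzero

theorem sum_mul_deriv_deriv_nonpos_of_isLocalMax_sum_sq {ι : Type*} [Fintype ι]
    {φ ψ : ι → ℝ → ℝ} {c : ι → ℝ} {s₀ : ℝ}
    (hφ : ∀ᶠ s in 𝓝 s₀, ∀ i, HasDerivAt (φ i) (ψ i s) s)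
    (hψ : ∀ i, HasDerivAt (ψ i) (c i) s₀)
    (hmax : IsLocalMax (fun s => ∑ i, φ i s ^ 2) s₀) :
    ∑ i, φ i s₀ * c i ≤ 0 := by
  set g := fun s => ∑ i, φ i s ^ 2
  have hg : ∀ᶠ s in 𝓝 s₀, HasDerivAt g (∑ i, 2 * φ i s * ψ i s) s :=
    hφ.mono fun s hs => by
      refine HasDerivAt.fun_sum fun i _ => ?_
      simpa [mul_comm] using (hs i).fun_pow 2
  have hg' : HasDerivAt (deriv g) (∑ i, 2 * (ψ i s₀ * ψ i s₀ + φ i s₀ * c i)) s₀ := by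
    have hsum : HasDerivAt (fun s => ∑ i, 2 * φ i s * ψ i s)
        (∑ i, 2 * (ψ i s₀ * ψ i s₀ + φ i s₀ * c i)) s₀ := by
      refine HasDerivAt.fun_sum fun i _ => ?_
      exact (((hφ.self_of_nhds i).const_mul 2).mul (hψ i)).congr_deriv (by ring)
    exact hsum.congr_of_eventuallyEq (hg.mono fun s hs => hs.deriv)
  have h2 := deriv_deriv_nonpos_of_isLocalMax hmax hg.self_of_nhds.continuousAt
  rw [hg'.deriv] at h2
  have hsq : 0 ≤ ∑ i, ψ i s₀ * ψ i s₀ := Finset.sum_nonneg fun i _ => mul_self_nonneg _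
  simp only [mul_add, Finset.sum_add_distrib, ← Finset.mul_sum] at h2
  linarith

theorem sum_mul_fderiv_fderiv_nonpos_of_isLocalMax_sum_sq {E : Type*} [NormedAddCommGroup E]
    [NormedSpace ℝ E] {ι : Type*} [Fintype ι] {u : ι → E → ℝ} {x₀ : E}
    (hu : ∀ i, ContDiffAt ℝ 2 (u i) x₀) (hmax : IsLocalMax (fun y => ∑ i, u i y ^ 2) x₀)
    (h : E) : ∑ i, u i x₀ * fderiv ℝ (fun y => fderiv ℝ (u i) y h) x₀ h ≤ 0 := by
  set L : ℝ → E := fun s => x₀ + s • h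
  have hL : ∀ s, HasDerivAt L h s := fun s => by
    simpa [L] using ((hasDerivAt_id s).smul_const h).const_add x₀
  have hL0 : L 0 = x₀ := by simp [L]
  have hdiff : ∀ᶠ y in 𝓝 x₀, ∀ i, DifferentiableAt ℝ (u i) y := by
    refine Filter.eventually_all.2 fun i => ?_
    exact ((hu i).eventually (by simp)).mono fun y hy => hy.differentiableAt (by norm_num)
  have hdiff_dir : ∀ i, DifferentiableAt ℝ (fun y => fderiv ℝ (u i) y h) x₀ := fun i =>
    (((hu i).fderiv_right (m := 1) (by norm_num)).differentiableAt (by norm_num)).clm_apply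
      (differentiableAt_const h)
  have hLx₀ : Tendsto L (𝓝 0) (𝓝 x₀) := hL0 ▸ (hL 0).continuousAt.tendsto
  have key := sum_mul_deriv_deriv_nonpos_of_isLocalMax_sum_sq (s₀ := 0)
    (φ := fun i s => u i (L s)) (ψ := fun i s => fderiv ℝ (u i) (L s) h)
    ((hLx₀.eventually hdiff).mono fun s hs i => (hs i).hasFDerivAt.comp_hasDerivAt s (hL s))
    (fun i => (hL0 ▸ (hdiff_dir i).hasFDerivAt).comp_hasDerivAt 0 (hL 0))
    ((hL0 ▸ hmax).comp_continuous (hL 0).continuousAt)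
  simpa only [hL0] using key

theorem sum_mul_lap_nonpos_of_isMaxOn_sum_sq {ι : Type*} [Fintype ι] {u : ι → E3 → ℝ}
    {s : Set E3} {x₀ : E3} (hu : ∀ i, ContDiffOn ℝ 2 (u i) s) (hs : s ∈ 𝓝 x₀)
    (hmax : IsMaxOn (fun y => ∑ i, u i y ^ 2) s x₀) : ∑ i, u i x₀ * lap (u i) x₀ ≤ 0 := by
  simp only [lap, Finset.mul_sum]
  rw [Finset.sum_comm]
  exact Finset.sum_nonpos fun k _ => sum_mul_fderiv_fderiv_nonpos_of_isLocalMax_sum_sq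
    (fun i => (hu i).contDiffAt hs) (hmax.isLocalMax hs) _

section FrobeniusSums

variable {l m n : Type*} [Fintype l] [Fintype m] [Fintype n]

theorem sq_sum_mul_apply_le (A B : Matrix m n ℝ) :
    (∑ i, ∑ j, A i j * B i j) ^ 2 ≤ (∑ i, ∑ j, A i j ^ 2) * ∑ i, ∑ j, B i j ^ 2 := by
  simpa only [Fintype.sum_prod_type] using
    Finset.sum_mul_sq_le_sq_mul_sq Finset.univ (fun p : m × n => A p.1 p.2) (fun p => B p.1 p.2)

theorem sum_sq_mul_apply_le (A : Matrix l m ℝ) (B : Matrix m n ℝ) :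
    ∑ i, ∑ j, (A * B) i j ^ 2 ≤ (∑ i, ∑ k, A i k ^ 2) * ∑ k, ∑ j, B k j ^ 2 := by
  calc ∑ i, ∑ j, (A * B) i j ^ 2 ≤ ∑ i, ∑ j, (∑ k, A i k ^ 2) * ∑ k, B k j ^ 2 := by
        gcongr with i _ j _
        exact Finset.sum_mul_sq_le_sq_mul_sq _ _ _
    _ = (∑ i, ∑ k, A i k ^ 2) * ∑ j, ∑ k, B k j ^ 2 := by
        rw [Finset.sum_mul_sum]
    _ = (∑ i, ∑ k, A i k ^ 2) * ∑ k, ∑ j, B k j ^ 2 := by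
        rw [Finset.sum_comm (s := (Finset.univ : Finset n))]

theorem Matrix.IsSymm.sum_mul_apply_eq_trace_mul {Q : Matrix n n ℝ} (hQ : Q.IsSymm)
    (M : Matrix n n ℝ) : ∑ i, ∑ j, Q i j * M i j = (Q * M).trace := by
  simp only [Matrix.trace, Matrix.diag, Matrix.mul_apply]
  rw [Finset.sum_comm]
  exact Finset.sum_congr rfl fun i _ => Finset.sum_congr rfl fun j _ => by rw [hQ.apply]

theorem Matrix.IsSymm.trace_mul_self {Q : Matrix n n ℝ} (hQ : Q.IsSymm) :
    (Q * Q).trace = ∑ i, ∑ j, Q i j ^ 2 := by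
  simp only [← hQ.sum_mul_apply_eq_trace_mul, sq]

theorem Matrix.IsSymm.sq_trace_mul_mul_le {Q : Matrix n n ℝ} (hQ : Q.IsSymm) :
    (Q * Q * Q).trace ^ 2 ≤ (Q * Q).trace ^ 3 := by
  rw [Matrix.mul_assoc, ← hQ.sum_mul_apply_eq_trace_mul, hQ.trace_mul_self]
  calc _ ≤ (∑ i, ∑ j, Q i j ^ 2) * ∑ i, ∑ j, (Q * Q) i j ^ 2 := sq_sum_mul_apply_le Q (Q * Q)
    _ ≤ (∑ i, ∑ j, Q i j ^ 2) * ((∑ i, ∑ j, Q i j ^ 2) * ∑ i, ∑ j, Q i j ^ 2) := by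
        gcongr
        exact sum_sq_mul_apply_le Q Q
    _ = (∑ i, ∑ j, Q i j ^ 2) ^ 3 := by ring

end FrobeniusSums

def ELrhsPairing (t d e f a b : ℝ) : ℝ :=
  t * a + 2 * a ^ 2 + e * a ^ 3 + (f - e) * b ^ 2 + d * a * b - 3 * Real.sqrt 6 * b

theorem trace_mul_ELrhs (t d e f : ℝ) {Q : Mat3} (hQ : Q.trace = 0) :
    (Q * ELrhs t d e f Q).trace = ELrhsPairing t d e f (Q * Q).trace (Q * Q * Q).trace := by
  simp only [ELrhs, ELrhsPairing, Matrix.mul_add, Matrix.mul_sub, Matrix.mul_smul,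
    Matrix.trace_add, Matrix.trace_sub, Matrix.trace_smul, Matrix.mul_one, hQ, smul_eq_mul,
    ← Matrix.mul_assoc]
  ring

theorem ELrhsPairing_pos (t d : ℝ) {e f : ℝ} (he : 0 < e) (hf : 0 < f) :
    ∃ R > 0, ∀ r b : ℝ, R ≤ r → |b| ≤ r ^ 3 → 0 < ELrhsPairing t d e f (r ^ 2) b := by
  set m := min e f
  have hm : 0 < m := lt_min he hf
  have hC : 0 ≤ (|t| + |d| + 8) / m := by positivity
  refine ⟨(|t| + |d| + 8) / m + 1, by positivity, fun r b hr hb => ?_⟩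
  have hr1 : 1 ≤ r := by linarith
  have hmr : |t| + |d| + 8 < m * r := by
    rw [← div_lt_iff₀' hm]; linarith
  have hb2 : b ^ 2 ≤ r ^ 6 := by
    rw [← sq_abs, show r ^ 6 = (r ^ 3) ^ 2 by ring]
    exact pow_le_pow_left₀ (abs_nonneg b) hb 2
  have hsixth : m * r ^ 6 ≤ e * r ^ 6 + (f - e) * b ^ 2 := by
    rcases le_total e f with hef | hfe
    · rw [show m = e from min_eq_left hef]; nlinarith [sq_nonneg b]
    · rw [show m = f from min_eq_right hfe]; nlinarith
  have hr35 : r ^ 3 ≤ r ^ 5 := pow_le_pow_right₀ hr1 (by norm_num)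
  have hr25 : r ^ 2 ≤ r ^ 5 := pow_le_pow_right₀ hr1 (by norm_num)
  have ht : -(|t| * r ^ 5) ≤ t * r ^ 2 := by
    nlinarith [neg_abs_le t, abs_nonneg t, sq_nonneg r]
  have hd : -(|d| * r ^ 5) ≤ d * r ^ 2 * b := by
    have : |d * r ^ 2 * b| ≤ |d| * r ^ 5 := by
      rw [abs_mul, abs_mul, abs_of_nonneg (sq_nonneg r), show r ^ 5 = r ^ 2 * r ^ 3 by ring,
        ← mul_assoc]
      gcongr
    linarith [neg_abs_le (d * r ^ 2 * b)]
  have hsqrt6 : Real.sqrt 6 < 8 / 3 := by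
    rw [Real.sqrt_lt' (by norm_num)]; norm_num
  have hb' : 3 * Real.sqrt 6 * b ≤ 8 * r ^ 5 := by
    nlinarith [le_abs_self b, abs_nonneg b, Real.sqrt_nonneg 6]
  have hlead : (|t| + |d| + 8) * r ^ 5 < m * r ^ 6 := by
    have : 0 < r ^ 5 := by positivity
    nlinarith
  unfold ELrhsPairing
  nlinarith [pow_nonneg (sq_nonneg r) 2]

theorem Matrix.IsSymm.fro_sq {Q : Mat3} (hQ : Q.IsSymm) : fro Q ^ 2 = (Q * Q).trace := by
  rw [fro, Real.sq_sqrt (by positivity), hQ.trace_mul_self]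

theorem Matrix.IsSymm.abs_trace_mul_mul_le {Q : Mat3} (hQ : Q.IsSymm) :
    |(Q * Q * Q).trace| ≤ fro Q ^ 3 := by
  refine abs_le_of_sq_le_sq ?_ (by unfold fro; positivity)
  calc (Q * Q * Q).trace ^ 2 ≤ (Q * Q).trace ^ 3 := hQ.sq_trace_mul_mul_le
    _ = (fro Q ^ 3) ^ 2 := by rw [← hQ.fro_sq]; ring

theorem fro_Qbdry {sp : ℝ} (hsp : 0 ≤ sp) {x : E3} (hx : ‖x‖ = 1) :
    fro (Qbdry sp x) = Real.sqrt (2 / 3) * sp := by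
  have hx2 : x 0 ^ 2 + x 1 ^ 2 + x 2 ^ 2 = 1 := by
    simpa [hx, Fin.sum_univ_three] using (EuclideanSpace.real_norm_sq_eq x).symm
  have hsum : ∑ i, ∑ j, Qbdry sp x i j ^ 2 = 2 / 3 * sp ^ 2 := by
    simp only [Qbdry, Matrix.smul_apply, Matrix.sub_apply, Matrix.of_apply, Matrix.one_apply,
      hx, one_pow, div_one, smul_eq_mul, Fin.sum_univ_three]
    norm_num [Fin.ext_iff]
    linear_combination (sp ^ 2 * (x 0 ^ 2 + x 1 ^ 2 + x 2 ^ 2 + 1 / 3)) * hx2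
  rw [fro, hsum, Real.sqrt_mul (by norm_num), Real.sqrt_sq hsp]

/-- A priori bound for solutions of the Euler–Lagrange system with the
sixth-order potential: there is `M = M(t,d,e,f) > 0` such that every classical
solution with homeotropic boundary data satisfies
`|Q(x)| ≤ max{M, √(2/3)·s₊}` on the closed unit ball. -/
theorem EL_solution_apriori_bound
    (t d e f : ℝ) (he : 0 < e) (hf : 0 < f) :
    ∃ M : ℝ, 0 < M ∧ ∀ ε : ℝ, 0 < ε → ∀ sp : ℝ, 0 < sp → ∀ Q : E3 → Mat3,
      (∀ i j, ContDiffOn ℝ 2 (fun y => Q y i j) (Metric.closedBall (0 : E3) 1)) →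
      (∀ x ∈ Metric.closedBall (0 : E3) 1, (Q x).IsSymm ∧ (Q x).trace = 0) →
      (∀ x ∈ Metric.ball (0 : E3) 1, ∀ i j,
        ε ^ 2 * lap (fun y => Q y i j) x = ELrhs t d e f (Q x) i j) →
      (∀ x : E3, ‖x‖ = 1 → Q x = Qbdry sp x) →
      ∀ x ∈ Metric.closedBall (0 : E3) 1,
        fro (Q x) ≤ max M (Real.sqrt (2 / 3) * sp) := by
  obtain ⟨R, hR, hpos⟩ := ELrhsPairing_pos t d he hf
  refine ⟨R, hR, fun ε _ sp hsp Q hC2 hQ hEL hbd x hx => ?_⟩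
  have hcont : ContinuousOn (fun y => ∑ i, ∑ j, Q y i j ^ 2) (Metric.closedBall (0 : E3) 1) := by
    have := fun i j => (hC2 i j).continuousOn
    fun_prop
  obtain ⟨x₀, hx₀, hmax⟩ := (isCompact_closedBall (0 : E3) 1).exists_isMaxOn
    ⟨0, Metric.mem_closedBall_self zero_le_one⟩ hcont
  refine le_trans (b := fro (Q x₀)) (Real.sqrt_le_sqrt (hmax hx)) ?_
  rcases (mem_closedBall_zero_iff.1 hx₀).lt_or_eq with hin | hon
  · refine le_max_of_le_left (not_lt.1 fun hRQ => ?_)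
    have hnhds : Metric.closedBall (0 : E3) 1 ∈ 𝓝 x₀ :=
      Filter.mem_of_superset (Metric.isOpen_ball.mem_nhds (mem_ball_zero_iff.2 hin))
        Metric.ball_subset_closedBall
    have hlap : ∑ i, ∑ j, Q x₀ i j * lap (fun y => Q y i j) x₀ ≤ 0 := by
      simpa only [Fintype.sum_prod_type] using
        sum_mul_lap_nonpos_of_isMaxOn_sum_sq (u := fun (p : Fin 3 × Fin 3) y => Q y p.1 p.2)
          (fun p => hC2 p.1 p.2) hnhds (by simpa only [Fintype.sum_prod_type] using hmax)
    obtain ⟨hsymm, htr⟩ := hQ x₀ hx₀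
    have hforce := hpos (fro (Q x₀)) _ hRQ.le hsymm.abs_trace_mul_mul_le
    rw [hsymm.fro_sq, ← trace_mul_ELrhs t d e f htr, ← hsymm.sum_mul_apply_eq_trace_mul] at hforce
    simp only [← hEL x₀ (mem_ball_zero_iff.2 hin), mul_left_comm _ (ε ^ 2), ← Finset.mul_sum]
      at hforce
    exact (mul_nonpos_of_nonneg_of_nonpos (sq_nonneg ε) hlap).not_gt hforce
  · rw [hbd x₀ hon, fro_Qbdry hsp.le hon]
    exact le_max_right _ _
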